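/- Let Σ ∈ ℝ^{k×k} be symmetric positive definite, M = -diag(Σ)/2 ∈ ℝ^k, and let φ_{M,Σ} be the corresponding Gaussian density. Then the measure on ℝ^{k+1} with density μ(dx₀,…,dx_k) = e^{-x₀} φ_{M',Σ}(x₁ - x₀, …, x_k - x₀) dx₀…dx_k, where M' = (-2λ²_{1,0},…,-2λ²_{k,0}) with λ²_{i,0} = Σ_{ii}/4, assigns measure 1 to the set A₁ = {x ∈ ℝ^{k+1} : x₀ > 0}, and the image of μ restricted to A₁ under the increment map x ↦ (x₁ - x₀, …, x_k - x₀) is the Gaussian measure N(M', Σ). -/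

import Mathlib

open Real MeasureTheory Matrix Finset

/-- Density of the k-variate normal distribution with mean `M` and covariance `S`. -/
noncomputable def gaussDensity (k : ℕ) (M : Fin k → ℝ) (S : Matrix (Fin k) (Fin k) ℝ)
    (y : Fin k → ℝ) : ℝ :=
  (Real.sqrt ((2 * Real.pi) ^ k * S.det))⁻¹ *
    Real.exp (-(1 / 2) * ((y - M) ⬝ᵥ S⁻¹.mulVec (y - M)))

/-- The k-variate Gaussian measure `N(M, S)` on `Fin k → ℝ`. -/
noncomputable def gaussMeasure (k : ℕ) (M : Fin k → ℝ) (S : Matrix (Fin k) (Fin k) ℝ) :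
    Measure (Fin k → ℝ) :=
  volume.withDensity (fun y => ENNReal.ofReal (gaussDensity k M S y))

/-- Hüsler-Reiss exponent measure in increment form: density
`e^{-x₀} φ_{M',Σ}(x₁-x₀, …, x_k-x₀)`. -/
noncomputable def HRexpMeasureMulti (k : ℕ) (S : Matrix (Fin k) (Fin k) ℝ) :
    Measure (Fin (k + 1) → ℝ) :=
  volume.withDensity (fun x => ENNReal.ofReal
    (Real.exp (-(x 0)) *
      gaussDensity k (fun i => -(S i i) / 2) S (fun i => x i.succ - x 0)))

/-!
In the coordinates `(t, y) = (x₀, x₁ - x₀, …, x_k - x₀)`, which arise from `x` by a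
volume-preserving shear, the density of the exponent measure factorises as `e^{-t} φ_{M',Σ}(y)`:
the measure is the product of `e^{-t} dt` with `N(M', Σ)`. Since `e^{-t} dt` gives mass one to
`t > 0`, restricting to `{x₀ > 0}` and projecting onto `y` leaves `N(M', Σ)`, a probability
measure: writing `Σ = A Aᵀ`, the substitution `y = M' + A z` turns `φ_{M',Σ}` into a product of
standard normal densities.
-/

open ProbabilityTheory

lemma MeasureTheory.MeasurePreserving.map_withDensity_comp {α β : Type*} [MeasurableSpace α]
    [MeasurableSpace β] {μ : Measure α} {ν : Measure β} {f : α → β} (hf : MeasurePreserving f μ ν)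
    (hfe : MeasurableEmbedding f) (g : β → ENNReal) :
    (μ.withDensity (g ∘ f)).map f = ν.withDensity g := by
  ext s hs
  rw [Measure.map_apply hfe.measurable hs, withDensity_apply _ (hfe.measurable hs),
    withDensity_apply _ hs]
  exact hf.setLIntegral_comp_preimage_emb hfe g s

lemma withDensity_exp_neg_Ioi_zero :
    volume.withDensity (fun t => ENNReal.ofReal (exp (-t))) (Set.Ioi 0) = 1 := by
  have hint : IntegrableOn (fun t : ℝ => exp (-t)) (Set.Ioi 0) := by
    simpa using exp_neg_integrableOn_Ioi 0 zero_lt_one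
  rw [withDensity_apply _ measurableSet_Ioi, ← ofReal_integral_eq_lintegral_ofReal hint
      (.of_forall fun t => (exp_pos _).le), integral_exp_neg_Ioi_zero, ENNReal.ofReal_one]

lemma lintegral_prod_gaussianPDFReal {ι : Type*} [Fintype ι] :
    ∫⁻ z : ι → ℝ, ENNReal.ofReal (∏ i, gaussianPDFReal 0 1 (z i)) = 1 := by
  rw [volume_pi, ← ofReal_integral_eq_lintegral_ofReal
      (Integrable.fintype_prod fun _ => integrable_gaussianPDFReal 0 1)
      (.of_forall fun z => Finset.prod_nonneg fun i _ => gaussianPDFReal_nonneg 0 1 (z i)),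
    integral_fintype_prod_eq_prod]
  simp [integral_gaussianPDFReal_eq_one]

section MatrixSubstitution

variable {ι : Type*} [Fintype ι] [DecidableEq ι] {A : Matrix ι ι ℝ}

lemma lintegral_comp_mulVec (hA : A.det ≠ 0) {f : (ι → ℝ) → ENNReal} (hf : Measurable f) :
    ∫⁻ z, f (A *ᵥ z) = ENNReal.ofReal |A.det⁻¹| * ∫⁻ y, f y := by
  rw [← smul_eq_mul, ← lintegral_smul_measure, ← Real.map_matrix_volume_pi_eq_smul_volume_pi hA,
    lintegral_map hf (toLin' A).continuous_of_finiteDimensional.measurable]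
  rfl

lemma Matrix.mulVec_dotProduct_mul_transpose_inv_mulVec (hA : A.det ≠ 0) (z : ι → ℝ) :
    A *ᵥ z ⬝ᵥ (A * Aᵀ)⁻¹ *ᵥ (A *ᵥ z) = z ⬝ᵥ z := by
  have hAt : IsUnit Aᵀ.det := by rwa [det_transpose, isUnit_iff_ne_zero]
  rw [mulVec_mulVec, Matrix.mul_inv_rev, Matrix.mul_assoc, nonsing_inv_mul _ hA.isUnit,
    Matrix.mul_one, dotProduct_mulVec, ← vecMul_transpose, vecMul_vecMul,
    mul_nonsing_inv _ hAt, vecMul_one]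

lemma Matrix.PosDef.exists_eq_mul_transpose {S : Matrix ι ι ℝ} (hS : S.PosDef) :
    ∃ A : Matrix ι ι ℝ, A.det ≠ 0 ∧ S = A * Aᵀ := by
  open scoped MatrixOrder in
  obtain ⟨B, hB⟩ := CStarAlgebra.nonneg_iff_eq_star_mul_self.mp hS.posSemidef.nonneg
  rw [star_eq_conjTranspose, conjTranspose_eq_transpose_of_trivial] at hB
  refine ⟨Bᵀ, fun h => hS.det_pos.ne' ?_, by rwa [transpose_transpose]⟩
  rw [hB, det_mul, h, zero_mul]

end MatrixSubstitution

section Gaussian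

variable {k : ℕ}

lemma continuous_gaussDensity (M : Fin k → ℝ) (S : Matrix (Fin k) (Fin k) ℝ) :
    Continuous (gaussDensity k M S) := by
  unfold gaussDensity dotProduct mulVec dotProduct
  fun_prop

lemma gaussDensity_add_mean (M : Fin k → ℝ) (S : Matrix (Fin k) (Fin k) ℝ) (y : Fin k → ℝ) :
    gaussDensity k M S (y + M) = gaussDensity k 0 S y := by
  simp [gaussDensity]

lemma abs_det_mul_gaussDensity_mulVec {A : Matrix (Fin k) (Fin k) ℝ} (hA : A.det ≠ 0)
    (z : Fin k → ℝ) :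
    |A.det| * gaussDensity k 0 (A * Aᵀ) (A *ᵥ z) = ∏ i, gaussianPDFReal 0 1 (z i) := by
  have hdet : (A * Aᵀ).det = |A.det| ^ 2 := by rw [det_mul, det_transpose, sq_abs, sq]
  have hroot : √((2 * π) ^ k * |A.det| ^ 2) = √(2 * π) ^ k * |A.det| := by
    rw [← Real.sqrt_sq (by positivity : 0 ≤ √(2 * π) ^ k * |A.det|), mul_pow (√(2 * π) ^ k),
      ← pow_mul, mul_comm k, pow_mul, Real.sq_sqrt (by positivity)]
  have hexp : -(1 / 2) * ∑ i, z i * z i = ∑ i, -(z i - 0) ^ 2 / (2 * ((1 : NNReal) : ℝ)) := by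
    rw [Finset.mul_sum]
    congr 1
    ext i
    simp only [sub_zero, NNReal.coe_one]
    ring
  rw [gaussDensity, sub_zero, mulVec_dotProduct_mul_transpose_inv_mulVec hA, hdet, hroot,
    dotProduct, hexp]
  simp only [gaussianPDFReal_def, Finset.prod_mul_distrib, ← Real.exp_sum, Finset.prod_const,
    Finset.card_univ, Fintype.card_fin, NNReal.coe_one, mul_one, inv_pow]
  field_simp

lemma lintegral_gaussDensity_mul_transpose (M : Fin k → ℝ) {A : Matrix (Fin k) (Fin k) ℝ}
    (hA : A.det ≠ 0) : ∫⁻ y, ENNReal.ofReal (gaussDensity k M (A * Aᵀ) y) = 1 := by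
  have hmeas : Measurable fun y => ENNReal.ofReal (gaussDensity k 0 (A * Aᵀ) y) :=
    (continuous_gaussDensity 0 _).measurable.ennreal_ofReal
  calc ∫⁻ y, ENNReal.ofReal (gaussDensity k M (A * Aᵀ) y)
      = ∫⁻ y, ENNReal.ofReal (gaussDensity k 0 (A * Aᵀ) y) := by
        rw [← lintegral_add_right_eq_self _ M]
        simp_rw [gaussDensity_add_mean]
    _ = ENNReal.ofReal |A.det| * ∫⁻ z, ENNReal.ofReal (gaussDensity k 0 (A * Aᵀ) (A *ᵥ z)) := by
        rw [lintegral_comp_mulVec hA hmeas, ← mul_assoc, ← ENNReal.ofReal_mul (abs_nonneg _),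
          ← abs_mul, mul_inv_cancel₀ hA, abs_one, ENNReal.ofReal_one, one_mul]
    _ = ∫⁻ z : Fin k → ℝ, ENNReal.ofReal (∏ i, gaussianPDFReal 0 1 (z i)) := by
        rw [← lintegral_const_mul' _ _ ENNReal.ofReal_ne_top]
        simp_rw [← ENNReal.ofReal_mul (abs_nonneg _), abs_det_mul_gaussDensity_mulVec hA]
    _ = 1 := lintegral_prod_gaussianPDFReal

lemma isProbabilityMeasure_gaussMeasure (M : Fin k → ℝ) {S : Matrix (Fin k) (Fin k) ℝ}
    (hS : S.PosDef) : IsProbabilityMeasure (gaussMeasure k M S) := by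
  obtain ⟨A, hA, rfl⟩ := hS.exists_eq_mul_transpose
  constructor
  rw [gaussMeasure, withDensity_apply _ MeasurableSet.univ, Measure.restrict_univ,
    lintegral_gaussDensity_mul_transpose M hA]

instance (M : Fin k → ℝ) (S : Matrix (Fin k) (Fin k) ℝ) : SFinite (gaussMeasure k M S) := by
  unfold gaussMeasure
  infer_instance

end Gaussian

section Increments

variable (k : ℕ)

noncomputable def incrementEquiv : (Fin (k + 1) → ℝ) ≃ᵐ ℝ × (Fin k → ℝ) where
  toFun x := (x 0, fun i => x i.succ - x 0)
  invFun p := Fin.cons p.1 fun i => p.2 i + p.1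
  left_inv x := by
    ext i
    cases i using Fin.cases <;> simp
  right_inv p := by simp
  measurable_toFun := by
    change Measurable fun x : Fin (k + 1) → ℝ => (x 0, fun i : Fin k => x i.succ - x 0)
    fun_prop
  measurable_invFun := by
    change Measurable fun p : ℝ × (Fin k → ℝ) =>
      (Fin.cons p.1 fun i : Fin k => p.2 i + p.1 : Fin (k + 1) → ℝ)
    refine measurable_pi_lambda _ fun i => ?_
    cases i using Fin.cases <;> simp only [Fin.cons_zero, Fin.cons_succ] <;> fun_prop

lemma measurePreserving_incrementEquiv :
    MeasurePreserving (incrementEquiv k) volume (volume.prod volume) := by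
  have hshear := (MeasurePreserving.id (volume : Measure ℝ)).skew_product
    (μc := (volume : Measure (Fin k → ℝ))) (g := fun t y => y - fun _ => t)
    (measurable_snd.sub (measurable_pi_lambda _ fun _ => measurable_fst))
    (.of_forall fun t => map_sub_right_eq_self volume _)
  have hcomp : ⇑(incrementEquiv k) =
      (fun p => (id p.1, p.2 - fun _ => p.1)) ∘ MeasurableEquiv.piFinSuccAbove (fun _ => ℝ) 0 := by
    funext x
    ext i <;> simp [incrementEquiv, MeasurableEquiv.piFinSuccAbove_apply, Fin.tail]
  rw [hcomp]
  exact hshear.comp (volume_preserving_piFinSuccAbove (fun _ : Fin (k + 1) => ℝ) 0)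

lemma map_incrementEquiv_HRexpMeasureMulti (S : Matrix (Fin k) (Fin k) ℝ) :
    (HRexpMeasureMulti k S).map (incrementEquiv k) =
      (volume.withDensity fun t => ENNReal.ofReal (exp (-t))).prod
        (gaussMeasure k (fun i => -(S i i) / 2) S) := by
  rw [gaussMeasure, prod_withDensity (by fun_prop)
      (continuous_gaussDensity _ S).measurable.ennreal_ofReal,
    ← (measurePreserving_incrementEquiv k).map_withDensity_comp
      (incrementEquiv k).measurableEmbedding]
  congr 1
  unfold HRexpMeasureMulti
  congr 1
  ext x
  simp [incrementEquiv, ENNReal.ofReal_mul (exp_pos _).le]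

end Increments

/-- The exponent measure assigns mass one to `{x₀ > 0}`, and the image of its restriction
to this set under the increment map is the Gaussian measure `N(M', Σ)` with
`M' = -diag(Σ)/2` (i.e., `M'_i = -2λ²_{i,0}` with `λ²_{i,0} = Σ_{ii}/4`). -/
theorem HRexpMeasureMulti_increments_gaussian (k : ℕ)
    (S : Matrix (Fin k) (Fin k) ℝ) (hS : S.PosDef) :
    HRexpMeasureMulti k S {x | 0 < x 0} = 1 ∧
    Measure.map (fun x : Fin (k + 1) → ℝ => fun i : Fin k => x i.succ - x 0)
        ((HRexpMeasureMulti k S).restrict {x | 0 < x 0}) =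
      gaussMeasure k (fun i => -(S i i) / 2) S := by
  have hpos : {x : Fin (k + 1) → ℝ | 0 < x 0} =
      incrementEquiv k ⁻¹' (Set.Ioi 0 ×ˢ Set.univ) := by
    ext x
    simp [incrementEquiv]
  have hmap : Measure.map (fun x : Fin (k + 1) → ℝ => fun i : Fin k => x i.succ - x 0)
      ((HRexpMeasureMulti k S).restrict {x | 0 < x 0}) =
      gaussMeasure k (fun i => -(S i i) / 2) S := by
    rw [show (fun x : Fin (k + 1) → ℝ => fun i : Fin k => x i.succ - x 0) =
        Prod.snd ∘ incrementEquiv k from rfl,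
      ← Measure.map_map measurable_snd (incrementEquiv k).measurable, hpos,
      ← (incrementEquiv k).restrict_map, map_incrementEquiv_HRexpMeasureMulti,
      ← Measure.restrict_prod_eq_prod_univ, Measure.map_snd_prod, Measure.restrict_apply_univ,
      withDensity_exp_neg_Ioi_zero, one_smul]
  refine ⟨?_, hmap⟩
  rw [← Measure.restrict_apply_univ,
    ← (isProbabilityMeasure_gaussMeasure (fun i => -(S i i) / 2) hS).measure_univ, ← hmap,
    Measure.map_apply (by fun_prop) .univ, Set.preimage_univ]
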